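/- arXiv:1603.05226 — 5 statements merged into one kernel-verified Lean document; each statement's English description precedes it below -/
import Mathlib

section
/- For any two random variables X and W on finite sets, and any ε > 0, the probability over w drawn from W that the min-entropy of X conditioned on W = w is at least the average conditional min-entropy H̃∞(X|W) minus log(1/ε), is at least 1 − ε. -/
open Finset Real
open scoped BigOperators Classical

/-- Bit strings of length `n`. -/
abbrev BS (n : ℕ) := Fin n → Bool

/-- `p` is a probability distribution on the finite type `Ω`. -/
def IsDist {Ω : Type*} [Fintype Ω] (p : Ω → ℝ) : Prop :=
  (∀ x, 0 ≤ p x) ∧ ∑ x, p x = 1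

/-- Statistical distance between two distributions on a finite type. -/
noncomputable def SD {Ω : Type*} [Fintype Ω] (p q : Ω → ℝ) : ℝ :=
  (∑ x, |p x - q x|) / 2

/-- The uniform distribution on a finite type. -/
noncomputable def unif (Ω : Type*) [Fintype Ω] : Ω → ℝ := fun _ => (Fintype.card Ω : ℝ)⁻¹

/-- Distribution of the random variable `X` on the finite probability space `(Ω, μ)`. -/
noncomputable def prDist {Ω A : Type*} [Fintype Ω] (μ : Ω → ℝ) (X : Ω → A) : A → ℝ :=
  fun a => ∑ ω ∈ univ.filter (fun ω => X ω = a), μ ω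

/-- Min-entropy (base 2) of a distribution on a finite type. -/
noncomputable def minEnt {A : Type*} [Fintype A] (p : A → ℝ) : ℝ :=
  - Real.logb 2 (⨆ a, p a)

/-- Conditional distribution of `X` given `W = w`. -/
noncomputable def condDist {Ω A B : Type*} [Fintype Ω] (μ : Ω → ℝ)
    (X : Ω → A) (W : Ω → B) (w : B) : A → ℝ :=
  fun a => prDist μ (fun ω => (X ω, W ω)) (a, w) / prDist μ W w

/-- Average conditional min-entropy `H̃∞(X | W)`. -/
noncomputable def avgCondMinEnt {Ω A B : Type*} [Fintype Ω] [Fintype A] [Fintype B]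
    (μ : Ω → ℝ) (X : Ω → A) (W : Ω → B) : ℝ :=
  - Real.logb 2 (∑ w, ⨆ a, prDist μ (fun ω => (X ω, W ω)) (a, w))

/-- First marginal of a joint distribution. -/
noncomputable def margFst {A B : Type*} [Fintype A] [Fintype B] (μ : A × B → ℝ) : A → ℝ :=
  fun a => ∑ b, μ (a, b)

/-- Second marginal of a joint distribution. -/
noncomputable def margSnd {A B : Type*} [Fintype A] [Fintype B] (μ : A × B → ℝ) : B → ℝ :=
  fun b => ∑ a, μ (a, b)

/-- Projection of a distribution on `r`-bit strings to the coordinates in `T`. -/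
noncomputable def projDist {r : ℕ} (μ : (Fin r → Bool) → ℝ) (T : Finset (Fin r)) :
    ({x // x ∈ T} → Bool) → ℝ :=
  fun w => ∑ z ∈ univ.filter (fun z : Fin r → Bool => ∀ i : {x // x ∈ T}, z i.1 = w i), μ z

/-- `Ext` is a strong seeded `(k, ε)`-extractor. -/
def IsStrongExt (n d m : ℕ) (k ε : ℝ) (Ext : BS n → BS d → BS m) : Prop :=
  ∀ p : BS n → ℝ, IsDist p → k ≤ minEnt p →
    SD (fun wy : BS m × BS d =>
          ∑ x ∈ univ.filter (fun x => Ext x wy.2 = wy.1), p x * unif (BS d) wy.2)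
       (fun wy => unif (BS m) wy.1 * unif (BS d) wy.2) ≤ ε

/-- `Ext` is a strong average-case seeded `(k, ε)`-extractor. -/
def IsStrongAvgExt (n d m : ℕ) (k ε : ℝ) (Ext : BS n → BS d → BS m) : Prop :=
  ∀ (T : Type) [Fintype T], ∀ μ : BS n × T → ℝ, IsDist μ →
    k ≤ avgCondMinEnt μ Prod.fst Prod.snd →
    SD (fun wyz : BS m × BS d × T =>
          ∑ x ∈ univ.filter (fun x => Ext x wyz.2.1 = wyz.1), μ (x, wyz.2.2) * unif (BS d) wyz.2.1)
       (fun wyz => unif (BS m) wyz.1 * unif (BS d) wyz.2.1 * margSnd μ wyz.2.2) ≤ ε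

/-- `M` is an `(L, 1, 0, ε, ε')`-non-malleable independence preserving merger
(single tampering adversary, uniform seed). -/
def IsNIPM1 (L m d m₁ : ℕ) (ε ε' : ℝ)
    (M : (Fin L → BS m) → BS d → BS m₁) : Prop :=
  ∀ (Ω : Type) [Fintype Ω], ∀ μ : Ω → ℝ, IsDist μ →
    ∀ (X X' : Ω → (Fin L → BS m)) (Y Y' : Ω → BS d),
      (∀ a b, prDist μ (fun ω => ((X ω, X' ω), (Y ω, Y' ω))) (a, b)
          = prDist μ (fun ω => (X ω, X' ω)) a * prDist μ (fun ω => (Y ω, Y' ω)) b) →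
      (d : ℝ) ≤ minEnt (prDist μ Y) →
      (∀ i : Fin L, SD (prDist μ (fun ω => X ω i)) (unif (BS m)) ≤ ε) →
      (∃ h : Fin L, SD (prDist μ (fun ω => (X ω h, X' ω h)))
          (fun p => unif (BS m) p.1 * prDist μ (fun ω => X' ω h) p.2) ≤ ε) →
      SD (prDist μ (fun ω => (M (X ω) (Y ω), M (X' ω) (Y' ω))))
         (fun p => unif (BS m₁) p.1 * prDist μ (fun ω => M (X' ω) (Y' ω)) p.2) ≤ ε'
/-- With probability at least `1 - ε` over `w ∼ W`, the min-entropy of `X | W = w`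
is at least `H̃∞(X|W) - log(1/ε)`. -/
theorem stmt0 {Ω A B : Type*} [Fintype Ω] [Fintype A] [Fintype B]
    (μ : Ω → ℝ) (hμ : IsDist μ) (X : Ω → A) (W : Ω → B) (ε : ℝ) (hε : 0 < ε) :
    1 - ε ≤ ∑ w ∈ univ.filter (fun w =>
        avgCondMinEnt μ X W - Real.logb 2 (1 / ε) ≤ minEnt (condDist μ X W w)),
      prDist μ W w := by
  obtain ⟨hμ0, hμ1⟩ := hμ
  set J : A → B → ℝ := fun a w => prDist μ (fun ω => (X ω, W ω)) (a, w) with hJ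
  set P : B → ℝ := fun w => prDist μ W w with hP
  have hJ0 : ∀ a w, 0 ≤ J a w := fun a w => Finset.sum_nonneg fun ω _ => hμ0 ω
  have hP0 : ∀ w, 0 ≤ P w := fun w => Finset.sum_nonneg fun ω _ => hμ0 ω
  have hPsum : ∀ w, P w = ∑ a, J a w := by
    intro w
    simp only [hP, hJ, prDist]
    rw [← Finset.sum_fiberwise_of_maps_to (g := X) (t := univ) (fun x _ => mem_univ _)]
    refine Finset.sum_congr rfl fun a _ => ?_
    congr 1
    ext ω
    simp [Prod.ext_iff, and_comm]
  set S : B → ℝ := fun w => ⨆ a, J a w with hS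
  have hA : Nonempty A := by
    rcases isEmpty_or_nonempty Ω with h | h
    · exfalso; rw [Finset.sum_eq_zero (fun ω _ => (h.elim ω))] at hμ1; norm_num at hμ1
    · exact ⟨X h.some⟩
  have hbdd : ∀ w, BddAbove (Set.range fun a => J a w) := fun w => Set.Finite.bddAbove (Set.finite_range _)
  have hS0 : ∀ w, 0 ≤ S w := fun w => Real.iSup_nonneg fun a => hJ0 a w
  have hJS : ∀ a w, J a w ≤ S w := fun a w => le_ciSup (hbdd w) a
  -- S w attained
  have hSatt : ∀ w, ∃ a, S w = J a w := by
    intro w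
    obtain ⟨a₀, _, ha₀⟩ := Finset.exists_max_image univ (fun a => J a w) ⟨hA.some, mem_univ _⟩
    exact ⟨a₀, le_antisymm (ciSup_le fun a => ha₀ a (mem_univ a)) (le_ciSup (hbdd w) a₀)⟩
  have hSP : ∀ w, S w ≤ P w := by
    intro w
    obtain ⟨a, ha⟩ := hSatt w
    rw [ha, hPsum]
    exact Finset.single_le_sum (fun a _ => hJ0 a w) (mem_univ a)
  set K : ℝ := ∑ w, S w with hK
  have hPtot : ∑ w, P w = 1 := by
    rw [← hμ1]
    simp only [hP, prDist]
    exact Finset.sum_fiberwise_of_maps_to (fun x _ => mem_univ _) μ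
  have hKpos : 0 < K := by
    by_contra h
    push_neg at h
    have hK0 : K = 0 := le_antisymm h (Finset.sum_nonneg fun w _ => hS0 w)
    have : ∀ w ∈ (univ : Finset B), S w = 0 := by
      intro w _
      exact le_antisymm (by rw [← hK0]; exact Finset.single_le_sum (fun w _ => hS0 w) (mem_univ w)) (hS0 w)
    have hP00 : ∀ w ∈ (univ : Finset B), P w = 0 := by
      intro w hw
      rw [hPsum]
      exact Finset.sum_eq_zero fun a _ =>
        le_antisymm ((hJS a w).trans (this w hw).le) (hJ0 a w)
    have : ∑ w, P w = 0 := Finset.sum_eq_zero hP00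
    rw [hPtot] at this; norm_num at this
  -- avg entropy
  have havg : avgCondMinEnt μ X W = - Real.logb 2 K := rfl
  -- bad set bound
  have key : ∀ w, ¬ (avgCondMinEnt μ X W - Real.logb 2 (1 / ε) ≤ minEnt (condDist μ X W w)) →
      P w ≤ ε / K * S w := by
    intro w hw
    rcases eq_or_lt_of_le (hP0 w) with h0 | hPw
    · rw [← h0]; exact mul_nonneg (div_nonneg hε.le hKpos.le) (hS0 w)
    have hSw : 0 < S w := by
      by_contra h
      push_neg at h
      have hS0' : S w = 0 := le_antisymm h (hS0 w)
      have : P w = 0 := by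
        rw [hPsum]
        exact Finset.sum_eq_zero fun a _ => le_antisymm ((hJS a w).trans hS0'.le) (hJ0 a w)
      linarith
    push_neg at hw
    -- minEnt(condDist) = - logb 2 (S w / P w)
    have hcond : minEnt (condDist μ X W w) = - Real.logb 2 (S w / P w) := by
      unfold minEnt condDist
      congr 1
      congr 1
      apply le_antisymm
      · refine ciSup_le fun a => ?_
        show J a w / P w ≤ S w / P w
        exact div_le_div_of_nonneg_right (hJS a w) (hP0 w)
      · obtain ⟨a, ha⟩ := hSatt w
        show S w / P w ≤ ⨆ a, J a w / P w
        rw [ha]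
        exact le_ciSup (f := fun a => J a w / P w) (Set.Finite.bddAbove (Set.finite_range _)) a
    rw [hcond, havg] at hw
    have h1 : Real.logb 2 K - Real.logb 2 ε < Real.logb 2 (S w / P w) := by
      have : Real.logb 2 (1/ε) = - Real.logb 2 ε := by rw [one_div, Real.logb_inv]
      linarith
    rw [← Real.logb_div hKpos.ne' hε.ne'] at h1
    have h2 : K / ε < S w / P w :=
      (Real.logb_lt_logb_iff (by norm_num) (by positivity) (by positivity)).mp h1
    rw [div_lt_div_iff₀ hε hPw] at h2
    rw [div_mul_eq_mul_div, le_div_iff₀ hKpos]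
    nlinarith
  -- conclude
  have hsplit := Finset.sum_filter_add_sum_filter_not univ
    (fun w => avgCondMinEnt μ X W - Real.logb 2 (1 / ε) ≤ minEnt (condDist μ X W w)) P
  rw [hPtot] at hsplit
  have hbad : ∑ w ∈ univ.filter (fun w => ¬ (avgCondMinEnt μ X W - Real.logb 2 (1 / ε) ≤ minEnt (condDist μ X W w))), P w ≤ ε := by
    calc ∑ w ∈ univ.filter _, P w ≤ ∑ w ∈ univ.filter (fun w => ¬ (avgCondMinEnt μ X W - Real.logb 2 (1 / ε) ≤ minEnt (condDist μ X W w))), ε / K * S w := by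
          apply Finset.sum_le_sum
          intro w hw
          exact key w (mem_filter.mp hw).2
      _ ≤ ∑ w, ε / K * S w := by
          apply Finset.sum_le_sum_of_subset_of_nonneg (Finset.filter_subset _ _)
          intro w _ _; exact mul_nonneg (div_nonneg hε.le hKpos.le) (hS0 w)
      _ = ε / K * K := by rw [← Finset.mul_sum]
      _ = ε := by field_simp
  linarith
end

section
/- If a random variable Y has support of size at most 2^ℓ, then the average conditional min-entropy of X given Y satisfies H̃∞(X|Y) ≥ H∞(X) − ℓ. -/
open Finset Real
open scoped BigOperators Classical

/-- If `Y` has support of size at most `2^ℓ`, then `H̃∞(X|Y) ≥ H∞(X) - ℓ`. -/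
theorem stmt1 {Ω A B : Type*} [Fintype Ω] [Fintype A] [Fintype B]
    (μ : Ω → ℝ) (hμ : IsDist μ) (X : Ω → A) (Y : Ω → B) (ℓ : ℕ)
    (hsupp : (univ.filter (fun y => prDist μ Y y ≠ 0)).card ≤ 2 ^ ℓ) :
    minEnt (prDist μ X) - ℓ ≤ avgCondMinEnt μ X Y := by
  classical
  obtain ⟨hnn, hsum⟩ := hμ
  -- basic facts
  have hΩ : Nonempty Ω := by
    by_contra h
    simp only [not_nonempty_iff] at h
    rw [Finset.univ_eq_empty, Finset.sum_empty] at hsum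
    norm_num at hsum
  have hA : Nonempty A := ⟨X (Classical.arbitrary Ω)⟩
  -- an ω with positive mass
  obtain ⟨ω₀, -, hω₀⟩ : ∃ ω ∈ (univ : Finset Ω), 0 < μ ω := by
    by_contra h
    push_neg at h
    have : ∑ ω, μ ω ≤ 0 := Finset.sum_nonpos fun ω hω => h ω hω
    linarith
  set J : A → B → ℝ := fun a y => prDist μ (fun ω => (X ω, Y ω)) (a, y) with hJ
  have hJnn : ∀ a y, 0 ≤ J a y := fun a y => Finset.sum_nonneg fun ω _ => hnn ω
  have hJX : ∀ a y, J a y ≤ prDist μ X a := by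
    intro a y
    apply Finset.sum_le_sum_of_subset_of_nonneg
    · intro ω hω
      simp only [mem_filter, mem_univ, true_and, Prod.mk.injEq] at hω ⊢
      exact hω.1
    · intro ω _ _; exact hnn ω
  have hJY : ∀ a y, J a y ≤ prDist μ Y y := by
    intro a y
    apply Finset.sum_le_sum_of_subset_of_nonneg
    · intro ω hω
      simp only [mem_filter, mem_univ, true_and, Prod.mk.injEq] at hω ⊢
      exact hω.2
    · intro ω _ _; exact hnn ω
  set M : ℝ := ⨆ a, prDist μ X a with hM
  have hbddX : BddAbove (Set.range (prDist μ X)) := (Set.finite_range _).bddAbove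
  have hbddJ : ∀ y, BddAbove (Set.range (fun a => J a y)) :=
    fun y => (Set.finite_range _).bddAbove
  have hsingle : μ ω₀ ≤ prDist μ X (X ω₀) := by
    apply Finset.single_le_sum (fun ω _ => hnn ω)
    simp
  have hMpos : 0 < M := lt_of_lt_of_le hω₀ (hsingle.trans (le_ciSup hbddX (X ω₀)))
  have hsupM : ∀ y, (⨆ a, J a y) ≤ M := by
    intro y
    exact ciSup_le fun a => (hJX a y).trans (le_ciSup hbddX a)
  have hsupnn : ∀ y, 0 ≤ ⨆ a, J a y := by
    intro y
    exact le_trans (hJnn (Classical.arbitrary A) y) (le_ciSup (hbddJ y) _)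
  set S : ℝ := ∑ y, ⨆ a, J a y with hS
  -- S > 0
  have hJω : μ ω₀ ≤ J (X ω₀) (Y ω₀) := by
    apply Finset.single_le_sum (fun ω _ => hnn ω)
    simp
  have hSpos : 0 < S := by
    have h1 : μ ω₀ ≤ ⨆ a, J a (Y ω₀) := hJω.trans (le_ciSup (hbddJ (Y ω₀)) (X ω₀))
    have h2 : (⨆ a, J a (Y ω₀)) ≤ S :=
      Finset.single_le_sum (fun y _ => hsupnn y) (mem_univ _)
    linarith
  -- S ≤ 2^ℓ * M
  have hSle : S ≤ (2 : ℝ) ^ ℓ * M := by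
    have hzero : ∀ y ∈ univ \ (univ.filter (fun y => prDist μ Y y ≠ 0)), (⨆ a, J a y) = 0 := by
      intro y hy
      simp only [mem_sdiff, mem_filter, mem_univ, true_and, not_not] at hy
      have : ∀ a, J a y = 0 := fun a => le_antisymm ((hJY a y).trans_eq hy) (hJnn a y)
      simp [this]
    have := Finset.sum_subset (Finset.filter_subset (fun y => prDist μ Y y ≠ 0) univ)
      (fun y hy hy' => hzero y (Finset.mem_sdiff.mpr ⟨hy, hy'⟩))
    rw [hS, ← this]
    calc ∑ y ∈ univ.filter (fun y => prDist μ Y y ≠ 0), ⨆ a, J a y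
        ≤ ∑ _y ∈ univ.filter (fun y => prDist μ Y y ≠ 0), M :=
          Finset.sum_le_sum fun y _ => hsupM y
      _ = (univ.filter (fun y => prDist μ Y y ≠ 0)).card * M := by
          rw [Finset.sum_const, nsmul_eq_mul]
      _ ≤ (2 : ℝ) ^ ℓ * M := by
          apply mul_le_mul_of_nonneg_right _ hMpos.le
          calc ((univ.filter (fun y => prDist μ Y y ≠ 0)).card : ℝ)
              ≤ ((2 ^ ℓ : ℕ) : ℝ) := by exact_mod_cast hsupp
            _ = (2 : ℝ) ^ ℓ := by push_cast; ring
  -- conclude with logs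
  have hlog : Real.logb 2 S ≤ ℓ + Real.logb 2 M := by
    calc Real.logb 2 S ≤ Real.logb 2 ((2 : ℝ) ^ ℓ * M) :=
          Real.logb_le_logb_of_le one_lt_two hSpos hSle
      _ = Real.logb 2 ((2:ℝ) ^ ℓ) + Real.logb 2 M := by
          rw [Real.logb_mul (by positivity) hMpos.ne']
      _ = ℓ + Real.logb 2 M := by
          rw [Real.logb_pow, Real.logb_self_eq_one one_lt_two]
          ring
  have : -Real.logb 2 M - ℓ ≤ -Real.logb 2 S := by linarith
  simpa [minEnt, avgCondMinEnt, hM, hS, hJ] using this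
end

section
/- The statistical distance of the XOR of two independent random variables X, Y on (Z/2)^m from uniform is at most twice the product of their individual statistical distances from uniform: |X + Y − U_m| ≤ 2·|X − U_m|·|Y − U_m|. -/
open Finset Real
open scoped BigOperators Classical

/-- XOR lemma: `|X + Y - U_m| ≤ 2 |X - U_m| |Y - U_m|` for independent `X, Y` on `(Z/2)^m`. -/
theorem stmt4 (m : ℕ) (p q : (Fin m → ZMod 2) → ℝ) (hp : IsDist p) (hq : IsDist q) :
    SD (fun x => ∑ y, p y * q (x - y)) (unif (Fin m → ZMod 2))
      ≤ 2 * SD p (unif (Fin m → ZMod 2)) * SD q (unif (Fin m → ZMod 2)) := by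
  classical
  set c : ℝ := (Fintype.card (Fin m → ZMod 2) : ℝ)⁻¹ with hc
  have hcard : (0 : ℝ) < (Fintype.card (Fin m → ZMod 2) : ℝ) := by
    exact_mod_cast Fintype.card_pos
  have hcc : (Fintype.card (Fin m → ZMod 2) : ℝ) * c = 1 := mul_inv_cancel₀ hcard.ne'
  have hsum_shift : ∀ x : (Fin m → ZMod 2), ∑ y, q (x - y) = 1 := by
    intro x
    rw [← hq.2]
    exact Fintype.sum_equiv (Equiv.subLeft x) _ _ (fun y => rfl)
  have key : ∀ x : (Fin m → ZMod 2), (∑ y, p y * q (x - y)) - c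
      = ∑ y, (p y - c) * (q (x - y) - c) := by
    intro x
    have h1 : ∑ y, (p y - c) * (q (x - y) - c)
        = ∑ y, (p y * q (x - y) - c * p y - c * q (x - y) + c * c) := by
      apply Finset.sum_congr rfl; intros; ring
    rw [h1]
    simp only [Finset.sum_add_distrib, Finset.sum_sub_distrib, ← Finset.mul_sum,
      Finset.sum_const, Finset.card_univ, nsmul_eq_mul]
    rw [hp.2, hsum_shift x, hcc]
    ring
  have habs : ∑ x : (Fin m → ZMod 2), |(∑ y, p y * q (x - y)) - c|
      ≤ (∑ y : (Fin m → ZMod 2), |p y - c|) * (∑ x : (Fin m → ZMod 2), |q x - c|) := by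
    calc ∑ x : (Fin m → ZMod 2), |(∑ y, p y * q (x - y)) - c|
        = ∑ x : (Fin m → ZMod 2), |∑ y, (p y - c) * (q (x - y) - c)| := by
          apply Finset.sum_congr rfl; intro x _; rw [key x]
      _ ≤ ∑ x : (Fin m → ZMod 2), ∑ y, |p y - c| * |q (x - y) - c| := by
          apply Finset.sum_le_sum; intro x _
          refine (Finset.abs_sum_le_sum_abs _ _).trans_eq ?_
          apply Finset.sum_congr rfl; intros; rw [abs_mul]
      _ = ∑ y : (Fin m → ZMod 2), |p y - c| * ∑ x, |q (x - y) - c| := by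
          rw [Finset.sum_comm]
          apply Finset.sum_congr rfl; intros; rw [Finset.mul_sum]
      _ = ∑ y : (Fin m → ZMod 2), |p y - c| * ∑ x, |q x - c| := by
          apply Finset.sum_congr rfl; intro y _
          congr 1
          exact Fintype.sum_equiv (Equiv.subRight y) _ _ (fun x => rfl)
      _ = (∑ y : (Fin m → ZMod 2), |p y - c|) * (∑ x : (Fin m → ZMod 2), |q x - c|) := by
          rw [Finset.sum_mul]
  show (∑ x : (Fin m → ZMod 2), |(∑ y, p y * q (x - y)) - c|) / 2
      ≤ 2 * ((∑ x : (Fin m → ZMod 2), |p x - c|) / 2) * ((∑ x : (Fin m → ZMod 2), |q x - c|) / 2)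
  have h2 : 2 * ((∑ x : (Fin m → ZMod 2), |p x - c|) / 2) * ((∑ x : (Fin m → ZMod 2), |q x - c|) / 2)
      = ((∑ x : (Fin m → ZMod 2), |p x - c|) * (∑ x : (Fin m → ZMod 2), |q x - c|)) / 2 := by ring
  rw [h2]
  linarith [habs]
end

section
/- Let X be a random variable with values in a set S and Y a random variable on {0,1}^t such that the joint distribution (X, Y) is ε-close to (X, U_t) where U_t is uniform and independent of X. Then for every y ∈ {0,1}^t, the conditional distribution of X given Y = y is 2^{t+1}·ε-close to the distribution of X. -/
open Finset Real
open scoped BigOperators Classical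

/-!
Let `u = 2^{-t}` and `p` the law of `X`. Since `μ` and `p ⊗ U_t` have the same mass, the positive
and the negative part of their difference both sum to their statistical distance, so restricted
to the column `Y = y` each is at most `ε`. Writing `μ(·, y) = s · c` with `s = Pr[Y = y]` and `c`
the conditional law, `min s u · SD(c, p)` is bounded by these parts, while `s ≥ u - ε`. Hence if
`2ε < u` then `SD(c, p) ≤ 2ε / u = 2^{t+1} ε`, and otherwise the bound is at least `1`.
-/

section StatisticalDistance

variable {α : Type*} [Fintype α]

lemma SD_nonneg (p q : α → ℝ) : 0 ≤ SD p q := by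
  unfold SD
  positivity

lemma SD_comm (p q : α → ℝ) : SD p q = SD q p := by
  simp only [SD, abs_sub_comm]

lemma sum_posPart_sub_eq_SD {p q : α → ℝ} (h : ∑ x, p x = ∑ x, q x) :
    ∑ x, (p x - q x)⁺ = SD p q := by
  have hdiff : ∑ x, ((p x - q x)⁺ - (p x - q x)⁻) = 0 := by
    simp only [posPart_sub_negPart, Finset.sum_sub_distrib, h, sub_self]
  have habs : ∑ x, ((p x - q x)⁺ + (p x - q x)⁻) = 2 * SD p q := by
    simp only [posPart_add_negPart, SD]
    ring
  rw [Finset.sum_sub_distrib] at hdiff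
  rw [Finset.sum_add_distrib] at habs
  linarith

lemma sum_negPart_sub_eq_SD {p q : α → ℝ} (h : ∑ x, p x = ∑ x, q x) :
    ∑ x, (p x - q x)⁻ = SD p q := by
  simp only [← posPart_neg, neg_sub, sum_posPart_sub_eq_SD h.symm, SD_comm q p]

lemma SD_le_one {p q : α → ℝ} (hp : ∀ x, 0 ≤ p x) (hp1 : ∑ x, p x ≤ 1) (hq : IsDist q) :
    SD p q ≤ 1 := by
  have hterm : ∀ x, |p x - q x| ≤ p x + q x := fun x =>
    abs_sub_le_iff.mpr ⟨by linarith [hq.1 x], by linarith [hp x]⟩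
  have := Finset.sum_le_sum fun x (_ : x ∈ univ) => hterm x
  rw [Finset.sum_add_distrib, hq.2] at this
  unfold SD
  linarith

-- If `u ≤ s` the terms `(s c - u p)⁺` dominate `u (c - p)⁺`; otherwise `(s c - u p)⁻` dominate
-- `s (c - p)⁻`.
lemma min_mul_SD_le {c p : α → ℝ} (hc : IsDist c) (hp : IsDist p) {s u : ℝ}
    (hs : 0 ≤ s) (hu : 0 ≤ u) :
    min s u * SD c p ≤ max (∑ x, (s * c x - u * p x)⁺) (∑ x, (s * c x - u * p x)⁻) := by
  have hcp : ∑ x, c x = ∑ x, p x := hc.2.trans hp.2.symm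
  rcases le_total u s with hus | hsu
  · rw [min_eq_right hus, ← sum_posPart_sub_eq_SD hcp, Finset.mul_sum]
    refine le_max_of_le_left (Finset.sum_le_sum fun x _ => ?_)
    calc u * (c x - p x)⁺ = (u * c x - u * p x)⁺ := by
          rw [← mul_sub, posPart_def, posPart_def, mul_max_of_nonneg _ _ hu, mul_zero]
      _ ≤ (s * c x - u * p x)⁺ :=
          posPart_mono (by nlinarith [hc.1 x])
  · rw [min_eq_left hsu, ← sum_negPart_sub_eq_SD hcp, Finset.mul_sum]
    refine le_max_of_le_right (Finset.sum_le_sum fun x _ => ?_)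
    calc s * (c x - p x)⁻ = (s * c x - s * p x)⁻ := by
          rw [← mul_sub, negPart_def, negPart_def, mul_max_of_nonneg _ _ hs, mul_zero, mul_neg]
      _ ≤ (s * c x - u * p x)⁻ :=
          negPart_anti (by nlinarith [hp.1 x])

lemma mul_SD_normalize_le {ν p : α → ℝ} (hν : ∀ x, 0 ≤ ν x) (hp : IsDist p) {u ε : ℝ}
    (hεu : 2 * ε < u) (hpos : ∑ x, (ν x - u * p x)⁺ ≤ ε) (hneg : ∑ x, (ν x - u * p x)⁻ ≤ ε) :
    u * SD (fun x => ν x / ∑ y, ν y) p ≤ 2 * ε := by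
  set s := ∑ y, ν y
  have hε : 0 ≤ ε := (Finset.sum_nonneg fun x _ => posPart_nonneg _).trans hpos
  have hdeficit : u - s ≤ ε := by
    have : u - s = ∑ x, -(ν x - u * p x) := by
      simp only [neg_sub, Finset.sum_sub_distrib, ← Finset.mul_sum, hp.2, mul_one, s]
    rw [this]
    exact (Finset.sum_le_sum fun x _ => neg_le_negPart _).trans hneg
  have hs : 0 < s := by linarith
  have hc : IsDist fun x => ν x / s :=
    ⟨fun x => div_nonneg (hν x) hs.le, by rw [← Finset.sum_div, div_self hs.ne']⟩
  have hmin : u / 2 ≤ min s u := le_min (by linarith) (by linarith)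
  have hclose := min_mul_SD_le (u := u) hc hp hs.le (by linarith)
  simp only [mul_div_cancel₀ _ hs.ne'] at hclose
  calc u * SD (fun x => ν x / s) p = 2 * (u / 2 * SD (fun x => ν x / s) p) := by ring
    _ ≤ 2 * (min s u * SD (fun x => ν x / s) p) := by gcongr; exact SD_nonneg _ _
    _ ≤ 2 * ε := by linarith [hclose.trans (max_le hpos hneg)]

end StatisticalDistance

section Marginals

variable {A B : Type*} [Fintype A] [Fintype B]

lemma isDist_margFst {μ : A × B → ℝ} (hμ : IsDist μ) : IsDist (margFst μ) :=
  ⟨fun _ => Finset.sum_nonneg fun _ _ => hμ.1 _, by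
    rw [← hμ.2, Fintype.sum_prod_type]
    rfl⟩

lemma sum_unif [Nonempty A] : ∑ x, unif A x = 1 := by
  simp [unif]

lemma sum_posPart_section_le_SD {μ ν : A × B → ℝ} (h : ∑ q, μ q = ∑ q, ν q) (b : B) :
    ∑ a, (μ (a, b) - ν (a, b))⁺ ≤ SD μ ν := by
  rw [← sum_posPart_sub_eq_SD h, Fintype.sum_prod_type_right]
  exact Finset.single_le_sum (f := fun b => ∑ a, (μ (a, b) - ν (a, b))⁺)
    (fun _ _ => Finset.sum_nonneg fun _ _ => posPart_nonneg _) (Finset.mem_univ b)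

lemma sum_negPart_section_le_SD {μ ν : A × B → ℝ} (h : ∑ q, μ q = ∑ q, ν q) (b : B) :
    ∑ a, (μ (a, b) - ν (a, b))⁻ ≤ SD μ ν := by
  rw [← sum_negPart_sub_eq_SD h, Fintype.sum_prod_type_right]
  exact Finset.single_le_sum (f := fun b => ∑ a, (μ (a, b) - ν (a, b))⁻)
    (fun _ _ => Finset.sum_nonneg fun _ _ => negPart_nonneg _) (Finset.mem_univ b)

end Marginals

/-- If `(X, Y)` is `ε`-close to `(X, U_t)`, then for every `y`, the conditional distribution
of `X` given `Y = y` is `2^{t+1} ε`-close to the distribution of `X`. -/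
theorem stmt8 {S : Type*} [Fintype S] (t : ℕ) (ε : ℝ)
    (μ : S × BS t → ℝ) (hμ : IsDist μ)
    (h : SD μ (fun p => margFst μ p.1 * unif (BS t) p.2) ≤ ε) :
    ∀ y : BS t, SD (fun x => μ (x, y) / margSnd μ y) (margFst μ) ≤ 2 ^ (t + 1) * ε := by
  intro y
  set p := margFst μ
  set u := unif (BS t) y
  have hp : IsDist p := isDist_margFst hμ
  have hu : u * 2 ^ t = 1 := by simp [u, unif]
  have hmass : ∑ q, μ q = ∑ q : S × BS t, p q.1 * unif (BS t) q.2 := by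
    rw [hμ.2, Fintype.sum_prod_type, ← Fintype.sum_mul_sum, hp.2, sum_unif, one_mul]
  have hpos := (sum_posPart_section_le_SD hmass y).trans h
  have hneg := (sum_negPart_section_le_SD hmass y).trans h
  simp only [mul_comm (p _)] at hpos hneg
  -- The first case also covers `margSnd μ y = 0`, where the conditional distribution is `0`.
  rcases le_or_gt 1 (2 ^ (t + 1) * ε) with hlarge | hsmall
  · refine (SD_le_one (fun x => div_nonneg (hμ.1 _) ?_) ?_ hp).trans hlarge
    · exact Finset.sum_nonneg fun x _ => hμ.1 _
    · rw [← Finset.sum_div]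
      exact div_self_le_one _
  · have hεu : 2 * ε < u := by
      refine lt_of_mul_lt_mul_right ?_ (pow_nonneg zero_le_two t)
      rw [hu]
      rw [pow_succ] at hsmall
      linarith
    have hnormalized := mul_SD_normalize_le (fun x => hμ.1 (x, y)) hp hεu hpos hneg
    calc SD (fun x => μ (x, y) / margSnd μ y) p
        = 2 ^ t * (u * SD (fun x => μ (x, y) / ∑ x', μ (x', y)) p) := by
          rw [← mul_assoc, mul_comm _ u, hu, one_mul]; rfl
      _ ≤ 2 ^ t * (2 * ε) := mul_le_mul_of_nonneg_left hnormalized (by positivity)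
      _ = 2 ^ (t + 1) * ε := by ring
end

section
/- Let D be a (t, γ)-wise independent distribution on {0,1}^n, meaning every restriction of D to t coordinates is γ-close in statistical distance to uniform on {0,1}^t. Then there exists a (perfectly) t-wise independent distribution on {0,1}^n that is n^t·γ-close to D in statistical distance. -/
open Finset Real
open scoped BigOperators Classical

/-!
Write `bias μ S = ∑ x, μ x χ_S(x)`, with `χ_S(x) = ∏_{i ∈ S} (-1)^(x i)`, for the Fourier
coefficients of `μ`. The projection of `μ` to `T` is uniform iff `bias μ S = 0` for every nonempty
`S ⊆ T`, and `|bias μ S|` is at most twice the distance of that projection from uniform, so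
`|bias μ S| ≤ 2γ` whenever `0 < #S ≤ t`.

Adding, for each such `S`, the mass `|bias μ S|` spread uniformly over the half-cube where `χ_S`
has the sign opposite to `bias μ S`, and renormalizing, kills all these coefficients and moves `μ`
by at most `∑ |bias μ S| ≤ 2γ ∑_{1 ≤ k ≤ t} (n choose k)`, which is at most `n^t γ` once
`n, t ≥ 3`. For `t = 2` the coefficients of a pair satisfy the sharper
`|bias μ {i}| + |bias μ {j}| + |bias μ {i, j}| ≤ 4γ`, and averaging it over all pairs gives
`n² γ`. For `t = 1` the coordinates are balanced one at a time, by moving mass between the faces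
`x i = true` and `x i = false` along the edges in direction `i`; this costs `|bias μ {i}| / 2 ≤ γ`
per coordinate and does not change the other one-dimensional marginals.
-/

lemma SD_self {Ω : Type*} [Fintype Ω] (p : Ω → ℝ) : SD p p = 0 := by simp [SD]

lemma SD_triangle {Ω : Type*} [Fintype Ω] (p q r : Ω → ℝ) : SD p r ≤ SD p q + SD q r := by
  simp only [SD, ← add_div, ← sum_add_distrib]
  gcongr with x
  exact abs_sub_le _ _ _

lemma abs_sum_sub_mul_le_SD {Ω : Type*} [Fintype Ω] (p q g : Ω → ℝ) {K : ℝ}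
    (hg : ∀ x, |g x| ≤ K) : |∑ x, (p x - q x) * g x| ≤ 2 * K * SD p q := by
  calc |∑ x, (p x - q x) * g x| ≤ ∑ x, |p x - q x| * K :=
        (abs_sum_le_sum_abs _ _).trans <| sum_le_sum fun x _ => by
          rw [abs_mul]; exact mul_le_mul_of_nonneg_left (hg x) (abs_nonneg _)
    _ = 2 * K * SD p q := by rw [← sum_mul, SD]; ring

lemma sum_unif_s11 (Ω : Type*) [Fintype Ω] [Nonempty Ω] : ∑ w, unif Ω w = 1 := by
  simp [unif]

namespace BoolCube

noncomputable section

variable {ι : Type*}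

def eps (b : Bool) : ℝ := if b then -1 else 1

@[simp] lemma eps_not (b : Bool) : eps (!b) = -eps b := by cases b <;> simp [eps]

@[simp] lemma abs_eps (b : Bool) : |eps b| = 1 := by cases b <;> simp [eps]

@[simp] lemma eps_mul_self (b : Bool) : eps b * eps b = 1 := by cases b <;> simp [eps]

lemma exists_abs_eq_eps_mul (a : ℝ) : ∃ b : Bool, |a| = eps b * a := by
  rcases abs_cases a with ⟨h, -⟩ | ⟨h, -⟩
  · exact ⟨false, by simp [eps, h]⟩
  · exact ⟨true, by simp [eps, h]⟩

def chi (S : Finset ι) (x : ι → Bool) : ℝ := ∏ i ∈ S, eps (x i)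

@[simp] lemma chi_empty (x : ι → Bool) : chi ∅ x = 1 := prod_empty

@[simp] lemma chi_singleton (i : ι) (x : ι → Bool) : chi {i} x = eps (x i) :=
  prod_singleton _ _

@[simp] lemma abs_chi (S : Finset ι) (x : ι → Bool) : |chi S x| = 1 := by
  simp [chi, abs_prod]

@[simp] lemma chi_mul_self (S : Finset ι) (x : ι → Bool) : chi S x * chi S x = 1 := by
  simp [chi, ← prod_mul_distrib]

lemma ite_eq_eq_sum_chi_mul_chi [Fintype ι] (x y : ι → Bool) :
    (if x = y then 1 else 0 : ℝ) =
      (2 ^ Fintype.card ι)⁻¹ * ∑ R : Finset ι, chi R x * chi R y := by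
  have hcoord (a b : Bool) : (if a = b then 1 else 0 : ℝ) = (1 + eps a * eps b) / 2 := by
    cases a <;> cases b <;> norm_num [eps]
  calc (if x = y then 1 else 0 : ℝ) = ∏ i, (if x i = y i then 1 else 0 : ℝ) := by
        simp [prod_boole, funext_iff]
    _ = (2 ^ Fintype.card ι)⁻¹ * ∏ i, (1 + eps (x i) * eps (y i)) := by
        simp only [hcoord, prod_div_distrib, prod_const, card_univ]
        ring
    _ = _ := by
        rw [prod_one_add, powerset_univ]
        simp [chi, prod_mul_distrib]

section Flip

variable [DecidableEq ι]

def flipAt (i : ι) (x : ι → Bool) : ι → Bool := Function.update x i (!x i)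

@[simp] lemma flipAt_apply_self (i : ι) (x : ι → Bool) : flipAt i x i = !x i := by
  simp [flipAt]

lemma flipAt_apply_of_ne {i j : ι} (x : ι → Bool) (h : j ≠ i) : flipAt i x j = x j :=
  Function.update_of_ne h _ _

lemma flipAt_involutive (i : ι) : Function.Involutive (flipAt i) := by
  intro x
  ext j
  rcases eq_or_ne j i with rfl | h
  · simp
  · rw [flipAt_apply_of_ne _ h, flipAt_apply_of_ne _ h]

lemma chi_flipAt (S : Finset ι) (i : ι) (x : ι → Bool) :
    chi S (flipAt i x) = (if i ∈ S then -1 else 1) * chi S x := by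
  split_ifs with hi
  · rw [chi, chi, ← mul_prod_erase S _ hi, ← mul_prod_erase S _ hi,
      prod_congr rfl fun j hj => by rw [flipAt_apply_of_ne _ (ne_of_mem_erase hj)]]
    simp
  · rw [one_mul]
    exact prod_congr rfl fun j hj => by rw [flipAt_apply_of_ne _ (ne_of_mem_of_not_mem hj hi)]

variable [Fintype ι]

lemma sum_comp_flipAt {M : Type*} [AddCommMonoid M] (i : ι) (f : (ι → Bool) → M) :
    ∑ x, f (flipAt i x) = ∑ x, f x :=
  (flipAt_involutive i).bijective.sum_comp f

lemma sum_eq_zero_of_comp_flipAt {i : ι} {f : (ι → Bool) → ℝ}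
    (h : ∀ x, f (flipAt i x) = -f x) : ∑ x, f x = 0 := by
  have := sum_comp_flipAt i f
  simp only [h, sum_neg_distrib] at this
  linarith

lemma sum_ite_comp_flipAt (i : ι) (b : Bool) (f g : (ι → Bool) → ℝ) :
    ∑ x, (if x i = b then f x else g (flipAt i x)) = ∑ x, if x i = b then f x + g x else 0 := by
  have hg : ∑ x, (if x i = b then 0 else g (flipAt i x)) = ∑ x, if x i = b then g x else 0 := by
    rw [← sum_comp_flipAt i fun x => if x i = b then g x else 0]
    refine sum_congr rfl fun x _ => ?_
    cases hx : x i <;> cases b <;> simp [hx]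
  calc ∑ x, (if x i = b then f x else g (flipAt i x))
      = ∑ x, (if x i = b then f x else 0) + ∑ x, (if x i = b then 0 else g (flipAt i x)) := by
        rw [← sum_add_distrib]
        exact sum_congr rfl fun x _ => by split_ifs <;> ring
    _ = ∑ x, if x i = b then f x + g x else 0 := by
        rw [hg, ← sum_add_distrib]
        exact sum_congr rfl fun x _ => by split_ifs <;> ring

end Flip

variable [Fintype ι] [DecidableEq ι]

def bias (μ : (ι → Bool) → ℝ) (S : Finset ι) : ℝ := ∑ x, μ x * chi S x

@[simp] lemma bias_empty (μ : (ι → Bool) → ℝ) : bias μ ∅ = ∑ x, μ x := by simp [bias]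

lemma sum_chi_mul_chi (S R : Finset ι) :
    ∑ x, chi S x * chi R x = if S = R then 2 ^ Fintype.card ι else 0 := by
  split_ifs with h
  · simp [h]
  obtain ⟨i, hi⟩ := symmDiff_nonempty.mpr h
  refine sum_eq_zero_of_comp_flipAt (i := i) fun x => ?_
  rw [chi_flipAt, chi_flipAt]
  rcases mem_symmDiff.mp hi with ⟨hS, hR⟩ | ⟨hR, hS⟩ <;> simp [hS, hR]

lemma sum_chi {S : Finset ι} (hS : S.Nonempty) : ∑ x, chi S x = 0 := by
  simpa [hS.ne_empty] using sum_chi_mul_chi S ∅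

section Projection

variable {n : ℕ}

def res (T : Finset (Fin n)) (z : Fin n → Bool) : T → Bool := fun i => z i

lemma projDist_eq_sum_mul_ite (μ : (Fin n → Bool) → ℝ) (T : Finset (Fin n)) (w : T → Bool) :
    projDist μ T w = ∑ z, μ z * if res T z = w then 1 else 0 := by
  simp [projDist, sum_filter, res, funext_iff]

lemma sum_projDist_mul (μ : (Fin n → Bool) → ℝ) (T : Finset (Fin n)) (g : (T → Bool) → ℝ) :
    ∑ w, projDist μ T w * g w = ∑ z, μ z * g (res T z) := by
  simp only [projDist_eq_sum_mul_ite, sum_mul, mul_assoc, ite_mul, one_mul, zero_mul]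
  rw [sum_comm]
  simp

lemma sum_projDist (μ : (Fin n → Bool) → ℝ) (T : Finset (Fin n)) :
    ∑ w, projDist μ T w = ∑ z, μ z := by
  simpa using sum_projDist_mul μ T fun _ => 1

lemma chi_res {T : Finset (Fin n)} (R : Finset T) (z : Fin n → Bool) :
    chi R (res T z) = chi (R.map (Function.Embedding.subtype _)) z := by
  simp [chi, res]

lemma projDist_eq_sum_bias (ν : (Fin n → Bool) → ℝ) (T : Finset (Fin n)) (w : T → Bool) :
    projDist ν T w =
      (2 ^ #T)⁻¹ * ∑ R : Finset T, bias ν (R.map (Function.Embedding.subtype _)) * chi R w := by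
  simp only [projDist_eq_sum_mul_ite, ite_eq_eq_sum_chi_mul_chi, Fintype.card_coe, mul_sum,
    bias, sum_mul, chi_res]
  rw [sum_comm]
  refine sum_congr rfl fun R _ => sum_congr rfl fun z _ => ?_
  ring

lemma projDist_eq_unif_of_bias_eq_zero {ν : (Fin n → Bool) → ℝ} {T : Finset (Fin n)}
    (hν : ∑ z, ν z = 1) (h : ∀ S ⊆ T, S.Nonempty → bias ν S = 0) :
    projDist ν T = unif (T → Bool) := by
  ext w
  rw [projDist_eq_sum_bias, sum_eq_single ∅]
  · simp [bias, hν, unif]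
  · intro R _ hR
    have hRT : R.map (Function.Embedding.subtype _) ⊆ T := fun x hx => by
      obtain ⟨a, -, rfl⟩ := mem_map.1 hx
      exact a.2
    rw [h _ hRT (by simpa [nonempty_iff_ne_empty] using hR), zero_mul]
  · simp

lemma bias_map_eq_sum_sub_unif_mul_chi (μ : (Fin n → Bool) → ℝ) {T : Finset (Fin n)}
    {R : Finset T} (hR : R.Nonempty) :
    bias μ (R.map (Function.Embedding.subtype _)) =
      ∑ w, (projDist μ T w - unif (T → Bool) w) * chi R w := by
  have : ∑ w, unif (T → Bool) w * chi R w = 0 := by simp [unif, ← mul_sum, sum_chi hR]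
  simp only [sub_mul, sum_sub_distrib, this, sub_zero, sum_projDist_mul, chi_res, bias]

lemma abs_bias_le_two_mul_SD (μ : (Fin n → Bool) → ℝ) {S T : Finset (Fin n)} (hST : S ⊆ T)
    (hS : S.Nonempty) : |bias μ S| ≤ 2 * SD (projDist μ T) (unif (T → Bool)) := by
  have hS' : S = (S.subtype (· ∈ T)).map (Function.Embedding.subtype _) :=
    (subtype_map_of_mem fun _ h => hST h).symm
  obtain ⟨i, hi⟩ := hS
  rw [hS', bias_map_eq_sum_sub_unif_mul_chi μ ⟨⟨i, hST hi⟩, mem_subtype.2 hi⟩]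
  simpa using abs_sum_sub_mul_le_SD _ _ _ fun w => (abs_chi _ w).le

end Projection

section Mixing

variable (μ : (ι → Bool) → ℝ) (𝒮 : Finset (Finset ι))

def correction (x : ι → Bool) : ℝ :=
  (2 ^ Fintype.card ι)⁻¹ * ∑ S ∈ 𝒮, (|bias μ S| - bias μ S * chi S x)

def mixture (x : ι → Bool) : ℝ := (μ x + correction μ 𝒮 x) / (1 + ∑ S ∈ 𝒮, |bias μ S|)

lemma correction_nonneg (x : ι → Bool) : 0 ≤ correction μ 𝒮 x := by
  refine mul_nonneg (by positivity) (sum_nonneg fun S _ => sub_nonneg.2 ?_)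
  calc bias μ S * chi S x ≤ |bias μ S * chi S x| := le_abs_self _
    _ = |bias μ S| := by simp [abs_mul]

lemma bias_correction (R : Finset ι) :
    bias (correction μ 𝒮) R =
      (if R = ∅ then ∑ S ∈ 𝒮, |bias μ S| else 0) - if R ∈ 𝒮 then bias μ R else 0 := by
  have hχ : ∑ x, chi R x = if R = ∅ then 2 ^ Fintype.card ι else 0 := by
    simpa [eq_comm] using sum_chi_mul_chi R ∅
  calc bias (correction μ 𝒮) R
      = (2 ^ Fintype.card ι)⁻¹ * ∑ S ∈ 𝒮,
          (|bias μ S| * ∑ x, chi R x - bias μ S * ∑ x, chi S x * chi R x) := by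
        rw [bias]
        simp only [correction, mul_assoc, ← mul_sum, sum_mul]
        rw [sum_comm]
        simp only [sub_mul, sum_sub_distrib, mul_assoc, ← mul_sum]
    _ = _ := by
        simp only [hχ, sum_chi_mul_chi, mul_ite, mul_zero, sum_sub_distrib, sum_ite_eq']
        split_ifs <;> simp only [sum_const_zero, ← sum_mul] <;> field_simp <;> ring

lemma isDist_mixture (hμ : IsDist μ) (h𝒮 : ∅ ∉ 𝒮) : IsDist (mixture μ 𝒮) := by
  have hA : 0 ≤ ∑ S ∈ 𝒮, |bias μ S| := sum_nonneg fun S _ => abs_nonneg _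
  refine ⟨fun x => div_nonneg (add_nonneg (hμ.1 x) (correction_nonneg μ 𝒮 x)) (by linarith), ?_⟩
  have := bias_correction μ 𝒮 ∅
  simp only [bias_empty, if_pos, h𝒮, if_false, sub_zero] at this
  simp only [mixture, ← sum_div, sum_add_distrib, hμ.2, this]
  exact div_self (by linarith)

lemma bias_mixture {R : Finset ι} (hR : R ∈ 𝒮) (h𝒮 : ∅ ∉ 𝒮) : bias (mixture μ 𝒮) R = 0 := by
  have hR0 : R ≠ ∅ := by rintro rfl; exact h𝒮 hR
  have := bias_correction μ 𝒮 R
  simp only [hR0, hR, if_true, if_false, zero_sub] at this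
  simp only [bias, mixture, div_mul_eq_mul_div, ← sum_div, add_mul, sum_add_distrib]
  rw [← bias, ← bias, this, add_neg_cancel, zero_div]

lemma SD_mixture_le (hμ : IsDist μ) (h𝒮 : ∅ ∉ 𝒮) :
    SD μ (mixture μ 𝒮) ≤ ∑ S ∈ 𝒮, |bias μ S| := by
  set A := ∑ S ∈ 𝒮, |bias μ S|
  have hA : 0 ≤ A := sum_nonneg fun S _ => abs_nonneg _
  have hcorr : ∑ x, correction μ 𝒮 x = A := by
    simpa [h𝒮] using bias_correction μ 𝒮 ∅
  have hdiff (x) : μ x - mixture μ 𝒮 x = (A * μ x - correction μ 𝒮 x) / (1 + A) := by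
    rw [mixture]; field_simp; ring
  calc SD μ (mixture μ 𝒮) = (∑ x, |A * μ x - correction μ 𝒮 x|) / 2 / (1 + A) := by
        simp only [SD, hdiff, abs_div, abs_of_pos (by linarith : (0 : ℝ) < 1 + A), ← sum_div]
        ring
    _ ≤ (∑ x, (A * μ x + correction μ 𝒮 x)) / 2 / (1 + A) := by
        gcongr with x
        exact (abs_sub _ _).trans_eq <| by
          rw [abs_of_nonneg (mul_nonneg hA (hμ.1 x)), abs_of_nonneg (correction_nonneg μ 𝒮 x)]
    _ = A / (1 + A) := by rw [sum_add_distrib, ← mul_sum, hμ.2, hcorr]; ring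
    _ ≤ A := div_le_self hA (by linarith)

end Mixing

section SmallSets

variable (ι) in
def smallSets (t : ℕ) : Finset (Finset ι) := (Icc 1 t).biUnion fun k => powersetCard k univ

lemma mem_smallSets {t : ℕ} {S : Finset ι} : S ∈ smallSets ι t ↔ S.Nonempty ∧ #S ≤ t := by
  simp [smallSets, Nat.one_le_iff_ne_zero, nonempty_iff_ne_empty]

lemma empty_notMem_smallSets (t : ℕ) : ∅ ∉ smallSets ι t := by simp [mem_smallSets]

lemma sum_smallSets {M : Type*} [AddCommMonoid M] (t : ℕ) (f : Finset ι → M) :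
    ∑ S ∈ smallSets ι t, f S = ∑ k ∈ Icc 1 t, ∑ S ∈ powersetCard k univ, f S :=
  sum_biUnion fun _ _ _ _ hkl => disjoint_left.2 fun _ hk hl =>
    hkl ((mem_powersetCard.1 hk).2.symm.trans (mem_powersetCard.1 hl).2)

lemma card_smallSets (t : ℕ) : #(smallSets ι t) = ∑ k ∈ Icc 1 t, (Fintype.card ι).choose k := by
  rw [card_eq_sum_ones, sum_smallSets]
  simp

end SmallSets

lemma two_mul_sum_choose_le_pow {n t : ℕ} (hn : 3 ≤ n) (ht : 3 ≤ t) :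
    2 * ∑ k ∈ Icc 1 t, (n.choose k : ℝ) ≤ (n : ℝ) ^ t := by
  have hn' : (3 : ℝ) ≤ n := by exact_mod_cast hn
  induction t, ht using Nat.le_induction with
  | base =>
    have h2 := Nat.choose_le_pow_div (α := ℝ) 2 n
    have h3 := Nat.choose_le_pow_div (α := ℝ) 3 n
    simp only [Nat.factorial, Nat.cast_mul] at h2 h3
    rw [show Icc 1 3 = {1, 2, 3} by rfl, sum_insert (by simp), sum_insert (by simp),
      sum_singleton, Nat.choose_one_right]
    nlinarith
  | succ t ht ih =>
    have hfac : (24 : ℝ) ≤ (t + 1).factorial := by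
      exact_mod_cast (Nat.factorial_le (by omega : 4 ≤ t + 1)).trans' (by decide)
    have hchoose : (n.choose (t + 1) : ℝ) * 24 ≤ (n : ℝ) ^ (t + 1) := by
      have := Nat.choose_le_pow_div (α := ℝ) (t + 1) n
      rw [le_div_iff₀ (by positivity)] at this
      nlinarith [pow_nonneg (Nat.cast_nonneg (α := ℝ) n) (t + 1)]
    have hpow : (n : ℝ) ^ t * 3 ≤ (n : ℝ) ^ (t + 1) := by
      rw [pow_succ]; exact mul_le_mul_of_nonneg_left hn' (by positivity)
    rw [sum_Icc_succ_top (by omega)]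
    linarith

lemma card_filter_mem_powersetCard_two (i : ι) :
    #{S ∈ powersetCard 2 (univ : Finset ι) | i ∈ S} = Fintype.card ι - 1 := by
  have hsplit := card_filter_add_card_filter_not (s := powersetCard 2 (univ : Finset ι))
    (fun S => i ∈ S)
  have hnot : {S ∈ powersetCard 2 (univ : Finset ι) | i ∉ S} = powersetCard 2 (univ.erase i) := by
    ext S; simp [mem_powersetCard, subset_erase, and_comm]
  obtain ⟨m, hm⟩ : ∃ m, Fintype.card ι = m + 1 :=
    Nat.exists_eq_add_one.2 (Fintype.card_pos_iff.2 ⟨i⟩)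
  rw [hnot, card_powersetCard, card_powersetCard, card_erase_of_mem (mem_univ i), card_univ, hm,
    Nat.choose_succ_succ', Nat.add_sub_cancel, Nat.choose_one_right] at hsplit
  rw [hm, Nat.add_sub_cancel]
  simp only [Nat.reduceAdd] at hsplit
  omega

lemma sum_powersetCard_two_sum (f : ι → ℝ) :
    ∑ S ∈ powersetCard 2 univ, ∑ i ∈ S, f i = (Fintype.card ι - 1 : ℕ) * ∑ i, f i := by
  calc ∑ S ∈ powersetCard 2 univ, ∑ i ∈ S, f i
      = ∑ S ∈ powersetCard 2 univ, ∑ i, if i ∈ S then f i else 0 := by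
        simp [sum_ite_mem]
    _ = ∑ i, #{S ∈ powersetCard 2 univ | i ∈ S} * f i := by
        rw [sum_comm]
        simp [← sum_filter]
    _ = _ := by simp [card_filter_mem_powersetCard_two, mul_sum]

section TwoWise

variable {n : ℕ}

lemma abs_eps_pair_sub_le (a b c x y : Bool) :
    |eps a * eps x + eps b * eps y + eps c * (eps x * eps y) - eps a * eps b * eps c| ≤ 2 := by
  cases a <;> cases b <;> cases c <;> cases x <;> cases y <;> norm_num [eps]

lemma sum_abs_bias_singleton_add_abs_bias_le (μ : (Fin n → Bool) → ℝ) (hμ : ∑ z, μ z = 1)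
    {T : Finset (Fin n)} (hT : #T = 2) :
    ∑ i ∈ T, |bias μ {i}| + |bias μ T| ≤ 4 * SD (projDist μ T) (unif (T → Bool)) := by
  obtain ⟨i, j, hij, hTij⟩ := card_eq_two.1 hT
  set I : T := ⟨i, by simp [hTij]⟩
  set J : T := ⟨j, by simp [hTij]⟩
  have hIJ : I ≠ J := fun h => hij (congrArg Subtype.val h)
  have hmapI : ({I} : Finset T).map (Function.Embedding.subtype _) = {i} := by simp [I]
  have hmapJ : ({J} : Finset T).map (Function.Embedding.subtype _) = {j} := by simp [J]
  have hmapIJ : ({I, J} : Finset T).map (Function.Embedding.subtype _) = T := by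
    simp [I, J, map_insert, hTij]
  set p := projDist μ T
  set u := unif (T → Bool)
  have hpu : ∑ w, (p w - u w) = 0 := by simp [p, u, sum_sub_distrib, sum_projDist, hμ, sum_unif_s11]
  have hbI : bias μ {i} = ∑ w, (p w - u w) * eps (w I) := by
    rw [← hmapI, bias_map_eq_sum_sub_unif_mul_chi μ (by simp)]
    simp [chi, p, u]
  have hbJ : bias μ {j} = ∑ w, (p w - u w) * eps (w J) := by
    rw [← hmapJ, bias_map_eq_sum_sub_unif_mul_chi μ (by simp)]
    simp [chi, p, u]
  have hbT : bias μ T = ∑ w, (p w - u w) * (eps (w I) * eps (w J)) := by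
    conv_lhs => rw [← hmapIJ]
    rw [bias_map_eq_sum_sub_unif_mul_chi μ (by simp)]
    simp [chi, prod_pair hIJ, p, u]
  obtain ⟨a, ha⟩ := exists_abs_eq_eps_mul (bias μ {i})
  obtain ⟨b, hb⟩ := exists_abs_eq_eps_mul (bias μ {j})
  obtain ⟨c, hc⟩ := exists_abs_eq_eps_mul (bias μ T)
  -- `p - u` has total mass zero, so subtracting the constant `a b c` is free; after it the
  -- weight has absolute value at most `2`.
  calc ∑ k ∈ T, |bias μ {k}| + |bias μ T|
      = eps a * bias μ {i} + eps b * bias μ {j} + eps c * bias μ T := by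
        rw [hTij, sum_pair hij, ← hTij, ha, hb, hc]
    _ = ∑ w, (p w - u w) * (eps a * eps (w I) + eps b * eps (w J)
          + eps c * (eps (w I) * eps (w J)) - eps a * eps b * eps c) := by
        simp only [hbI, hbJ, hbT, mul_sub, sum_sub_distrib, ← sum_mul, hpu, zero_mul, sub_zero,
          mul_add, sum_add_distrib, mul_sum]
        congr 1; congr 1
        all_goals exact sum_congr rfl fun w _ => by ring
    _ ≤ 2 * 2 * SD p u :=
        (le_abs_self _).trans <| abs_sum_sub_mul_le_SD _ _ _ fun w => abs_eps_pair_sub_le _ _ _ _ _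
    _ = 4 * SD p u := by ring

lemma sum_abs_bias_smallSets_two_le (μ : (Fin n → Bool) → ℝ) (hμ : ∑ z, μ z = 1) {γ : ℝ}
    (hγ : 0 ≤ γ) (hn : 2 ≤ n)
    (h : ∀ T : Finset (Fin n), #T = 2 → SD (projDist μ T) (unif (T → Bool)) ≤ γ) :
    ∑ S ∈ smallSets (Fin n) 2, |bias μ S| ≤ (n : ℝ) ^ 2 * γ := by
  set Q := ∑ i, |bias μ {i}|
  set P := ∑ S ∈ powersetCard 2 univ, |bias μ S|
  have hsplit : ∑ S ∈ smallSets (Fin n) 2, |bias μ S| = Q + P := by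
    rw [sum_smallSets, show Icc 1 2 = {1, 2} from rfl, sum_pair (by norm_num), powersetCard_one,
      sum_map]
    rfl
  have hcard : (#(powersetCard 2 (univ : Finset (Fin n))) : ℝ) = n * (n - 1) / 2 := by
    simp [Nat.cast_choose_two]
  have hP : P ≤ #(powersetCard 2 (univ : Finset (Fin n))) * (2 * γ) := by
    rw [← nsmul_eq_mul]
    refine sum_le_card_nsmul _ _ _ fun S hS => ?_
    have hS2 := (mem_powersetCard.1 hS).2
    have hSne : S.Nonempty := card_pos.1 (by omega)
    linarith [abs_bias_le_two_mul_SD μ subset_rfl hSne, h S hS2]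
  have hQP : (n - 1 : ℝ) * Q + P ≤ #(powersetCard 2 (univ : Finset (Fin n))) * (4 * γ) := by
    have := sum_le_card_nsmul (powersetCard 2 univ)
      (fun S => ∑ i ∈ S, |bias μ {i}| + |bias μ S|) (4 * γ) fun S hS => by
        have hS2 := (mem_powersetCard.1 hS).2
        linarith [sum_abs_bias_singleton_add_abs_bias_le μ hμ hS2, h S hS2]
    rw [sum_add_distrib, sum_powersetCard_two_sum, nsmul_eq_mul] at this
    simpa [Nat.cast_sub (by omega : 1 ≤ n)] using this
  have hn' : (2 : ℝ) ≤ n := by exact_mod_cast hn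
  rw [hsplit]
  -- `hP` suffices when `Q ≤ n γ`, and `hQP` when `Q > n γ`.
  rcases le_or_gt Q (n * γ) with hQ | hQ
  · nlinarith
  · nlinarith [mul_le_mul_of_nonneg_left hQ.le (by linarith : (0 : ℝ) ≤ n - 2)]

end TwoWise

section MoveMass

variable (i : ι) (b : Bool) (δ : ℝ) (ρ : (ι → Bool) → ℝ)

def faceMass : ℝ := ∑ x, if x i = b then ρ x else 0

def moveMass (x : ι → Bool) : ℝ := if x i = b then (1 - δ) * ρ x else ρ x + δ * ρ (flipAt i x)

omit [Fintype ι] in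
lemma moveMass_sub (x : ι → Bool) :
    moveMass i b δ ρ x - ρ x = if x i = b then -(δ * ρ x) else δ * ρ (flipAt i x) := by
  unfold moveMass
  split_ifs <;> ring

omit [Fintype ι] in
lemma moveMass_nonneg (hρ : ∀ x, 0 ≤ ρ x) (hδ₀ : 0 ≤ δ) (hδ₁ : δ ≤ 1) (x : ι → Bool) :
    0 ≤ moveMass i b δ ρ x := by
  unfold moveMass
  split_ifs
  · exact mul_nonneg (by linarith) (hρ x)
  · exact add_nonneg (hρ x) (mul_nonneg hδ₀ (hρ _))

lemma sum_moveMass_sub_mul {g : (ι → Bool) → ℝ} {s : ℝ} (hg : ∀ x, g (flipAt i x) = s * g x) :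
    ∑ x, (moveMass i b δ ρ x - ρ x) * g x =
      (s - 1) * δ * ∑ x, if x i = b then ρ x * g x else 0 := by
  have hpt (x : ι → Bool) : (moveMass i b δ ρ x - ρ x) * g x =
      if x i = b then -(δ * (ρ x * g x)) else δ * s * (ρ (flipAt i x) * g (flipAt i x)) := by
    rw [moveMass_sub]
    split_ifs
    · ring
    · have := hg (flipAt i x)
      rw [flipAt_involutive] at this
      rw [this]; ring
  simp only [hpt]
  rw [sum_ite_comp_flipAt i b _ fun y => δ * s * (ρ y * g y), mul_sum]
  exact sum_congr rfl fun x _ => by split_ifs <;> ring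

lemma sum_moveMass : ∑ x, moveMass i b δ ρ x = ∑ x, ρ x := by
  simpa [sub_mul, sum_sub_distrib, sub_eq_zero] using
    sum_moveMass_sub_mul i b δ ρ (g := fun _ => 1) (s := 1) fun _ => by ring

lemma bias_moveMass_singleton_of_ne {j : ι} (hji : j ≠ i) :
    bias (moveMass i b δ ρ) {j} = bias ρ {j} := by
  have := sum_moveMass_sub_mul i b δ ρ (g := fun x => eps (x j)) (s := 1)
    fun x => by simp [flipAt_apply_of_ne x hji]
  simp only [sub_self, zero_mul, sub_mul, sum_sub_distrib, sub_eq_zero] at this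
  simpa [bias] using this

lemma bias_moveMass_singleton_self :
    bias (moveMass i b δ ρ) {i} = bias ρ {i} - 2 * (δ * faceMass i b ρ) * eps b := by
  have hface : (∑ x, if x i = b then ρ x * eps (x i) else 0) = eps b * faceMass i b ρ := by
    rw [faceMass, mul_sum]
    exact sum_congr rfl fun x _ => by split_ifs with hx <;> simp [hx, mul_comm]
  have := sum_moveMass_sub_mul i b δ ρ (g := fun x => eps (x i)) (s := -1) fun x => by simp
  rw [hface] at this
  simp only [bias, chi_singleton, sub_mul, sum_sub_distrib] at this ⊢
  linarith

lemma sum_abs_moveMass_sub (hρ : ∀ x, 0 ≤ ρ x) (hδ : 0 ≤ δ) :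
    ∑ x, |moveMass i b δ ρ x - ρ x| = 2 * δ * faceMass i b ρ := by
  have hpt (x : ι → Bool) : |moveMass i b δ ρ x - ρ x| =
      if x i = b then δ * ρ x else δ * ρ (flipAt i x) := by
    rw [moveMass_sub]
    split_ifs <;> simp [abs_of_nonneg, hδ, hρ]
  simp only [hpt]
  rw [sum_ite_comp_flipAt i b _ fun y => δ * ρ y, faceMass, mul_sum]
  exact sum_congr rfl fun x _ => by split_ifs <;> ring

lemma eps_mul_bias_singleton_le_faceMass (hρ : ∀ x, 0 ≤ ρ x) :
    eps b * bias ρ {i} ≤ faceMass i b ρ := by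
  rw [bias, mul_sum]
  refine sum_le_sum fun x _ => ?_
  split_ifs with hx
  · rw [chi_singleton, hx, mul_left_comm, eps_mul_self, mul_one]
  · have : eps b * (ρ x * eps (x i)) = -ρ x := by
      cases hxi : x i <;> cases b <;> simp_all [eps]
    simp only [chi_singleton, this, neg_nonpos, hρ x]

end MoveMass

lemma exists_bias_singleton_eq_zero (i : ι) {ρ : (ι → Bool) → ℝ} (hρ : IsDist ρ) :
    ∃ ρ', IsDist ρ' ∧ bias ρ' {i} = 0 ∧ (∀ j ≠ i, bias ρ' {j} = bias ρ {j}) ∧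
      SD ρ ρ' ≤ |bias ρ {i}| / 2 := by
  obtain ⟨b, hb⟩ := exists_abs_eq_eps_mul (bias ρ {i})
  have hm : |bias ρ {i}| ≤ faceMass i b ρ := hb ▸ eps_mul_bias_singleton_le_faceMass i b ρ hρ.1
  have hm₀ : 0 ≤ faceMass i b ρ := (abs_nonneg _).trans hm
  -- `b` is the heavier face; moving the fraction `δ` of its mass lowers `eps b * bias ρ {i}`
  -- by `2 δ faceMass i b ρ`.
  set δ := |bias ρ {i}| / (2 * faceMass i b ρ)
  have hδm : δ * faceMass i b ρ = |bias ρ {i}| / 2 := by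
    rcases hm₀.eq_or_lt with h0 | hpos
    · rw [← h0]; linarith [abs_nonneg (bias ρ {i})]
    · simp only [δ]; field_simp
  have hδ₀ : 0 ≤ δ := div_nonneg (abs_nonneg _) (by linarith)
  have hδ₁ : δ ≤ 1 := div_le_one_of_le₀ (by linarith) (by linarith)
  refine ⟨moveMass i b δ ρ, ⟨moveMass_nonneg i b δ ρ hρ.1 hδ₀ hδ₁, (sum_moveMass ..).trans hρ.2⟩,
    ?_, fun j hj => bias_moveMass_singleton_of_ne i b δ ρ hj, ?_⟩
  · rw [bias_moveMass_singleton_self, hδm, hb]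
    linear_combination (-bias ρ {i}) * eps_mul_self b
  · simp only [SD, abs_sub_comm (ρ _), sum_abs_moveMass_sub i b δ ρ hρ.1 hδ₀]
    linarith

lemma exists_bias_singleton_eq_zero_on {ρ : (ι → Bool) → ℝ} (hρ : IsDist ρ) (s : Finset ι) :
    ∃ ν, IsDist ν ∧ (∀ i ∈ s, bias ν {i} = 0) ∧ (∀ i ∉ s, bias ν {i} = bias ρ {i}) ∧
      SD ρ ν ≤ ∑ i ∈ s, |bias ρ {i}| / 2 := by
  induction s using Finset.induction_on with
  | empty => exact ⟨ρ, hρ, by simp, by simp, by simp [SD_self]⟩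
  | insert a s ha ih =>
    obtain ⟨ν, hν, hzero, hout, hSD⟩ := ih
    obtain ⟨ν', hν', ha', hrest, hSD'⟩ := exists_bias_singleton_eq_zero a hν
    refine ⟨ν', hν', fun i hi => ?_, fun i hi => ?_, ?_⟩
    · rcases mem_insert.1 hi with rfl | hi
      · exact ha'
      · rw [hrest i (ne_of_mem_of_not_mem hi ha), hzero i hi]
    · rw [hrest i fun h => hi (h ▸ mem_insert_self a s), hout i fun h => hi (mem_insert_of_mem h)]
    · rw [sum_insert ha, ← hout a ha]
      linarith [SD_triangle ρ ν ν']

section KWise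

variable {n : ℕ}

lemma abs_bias_le_of_SD_projDist_le {μ : (Fin n → Bool) → ℝ} {t : ℕ} {γ : ℝ} (htn : t ≤ n)
    (h : ∀ T : Finset (Fin n), #T = t → SD (projDist μ T) (unif (T → Bool)) ≤ γ)
    {S : Finset (Fin n)} (hS : S ∈ smallSets (Fin n) t) : |bias μ S| ≤ 2 * γ := by
  obtain ⟨hne, hSt⟩ := mem_smallSets.1 hS
  obtain ⟨T, hST, -, hT⟩ := exists_subsuperset_card_eq (subset_univ S) hSt (by simpa using htn)
  linarith [abs_bias_le_two_mul_SD μ hST hne, h T hT]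

lemma exists_isDist_bias_smallSets_eq_zero {μ : (Fin n → Bool) → ℝ} (hμ : IsDist μ) (t : ℕ) :
    ∃ ν, IsDist ν ∧ (∀ S ∈ smallSets (Fin n) t, bias ν S = 0) ∧
      SD μ ν ≤ ∑ S ∈ smallSets (Fin n) t, |bias μ S| :=
  ⟨mixture μ _, isDist_mixture μ _ hμ (empty_notMem_smallSets t),
    fun _ hS => bias_mixture μ _ hS (empty_notMem_smallSets t),
    SD_mixture_le μ _ hμ (empty_notMem_smallSets t)⟩

lemma exists_isDist_bias_smallSets_one_eq_zero {μ : (Fin n → Bool) → ℝ} (hμ : IsDist μ) {γ : ℝ}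
    (hbias : ∀ i, |bias μ {i}| ≤ 2 * γ) :
    ∃ ν, IsDist ν ∧ (∀ S ∈ smallSets (Fin n) 1, bias ν S = 0) ∧ SD μ ν ≤ (n : ℝ) ^ 1 * γ := by
  obtain ⟨ν, hν, hzero, -, hSD⟩ := exists_bias_singleton_eq_zero_on hμ univ
  refine ⟨ν, hν, fun S hS => ?_, hSD.trans ?_⟩
  · obtain ⟨i, rfl⟩ := card_eq_one.1 <| le_antisymm (mem_smallSets.1 hS).2
      (mem_smallSets.1 hS).1.card_pos
    exact hzero i (mem_univ i)
  · calc ∑ i, |bias μ {i}| / 2 ≤ ∑ _i : Fin n, γ := sum_le_sum fun i _ => by linarith [hbias i]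
      _ = (n : ℝ) ^ 1 * γ := by simp

lemma sum_abs_bias_smallSets_le_of_three_le {μ : (Fin n → Bool) → ℝ} {t : ℕ} {γ : ℝ}
    (hγ : 0 ≤ γ) (hn : 3 ≤ n) (ht : 3 ≤ t)
    (hbias : ∀ S ∈ smallSets (Fin n) t, |bias μ S| ≤ 2 * γ) :
    ∑ S ∈ smallSets (Fin n) t, |bias μ S| ≤ (n : ℝ) ^ t * γ := by
  have hcount := two_mul_sum_choose_le_pow hn ht
  calc ∑ S ∈ smallSets (Fin n) t, |bias μ S| ≤ #(smallSets (Fin n) t) * (2 * γ) := by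
        rw [← nsmul_eq_mul]; exact sum_le_card_nsmul _ _ _ hbias
    _ ≤ (n : ℝ) ^ t * γ := by
        rw [card_smallSets, Fintype.card_fin]; push_cast; nlinarith

end KWise

end

end BoolCube

open BoolCube in
/-- Alon–Goldreich–Mansour: every `(t, γ)`-wise independent distribution on `{0,1}^n`
is `n^t γ`-close to some exactly `t`-wise independent distribution. -/
theorem stmt11 (n t : ℕ) (γ : ℝ) (hγ : 0 ≤ γ)
    (μ : (Fin n → Bool) → ℝ) (hμ : IsDist μ)
    (h : ∀ T : Finset (Fin n), T.card = t →
      SD (projDist μ T) (unif ({x // x ∈ T} → Bool)) ≤ γ) :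
    ∃ ν : (Fin n → Bool) → ℝ, IsDist ν ∧
      (∀ T : Finset (Fin n), T.card = t → projDist ν T = unif ({x // x ∈ T} → Bool)) ∧
      SD μ ν ≤ (n : ℝ) ^ t * γ := by
  rcases lt_or_ge n t with hnt | htn
  · refine ⟨μ, hμ, fun T hT => absurd (hT ▸ card_le_univ T) (by simpa using hnt), ?_⟩
    rw [SD_self]; positivity
  have hbias := fun S => abs_bias_le_of_SD_projDist_le (μ := μ) htn h (S := S)
  obtain ⟨ν, hν, hzero, hSD⟩ : ∃ ν, IsDist ν ∧ (∀ S ∈ smallSets (Fin n) t, bias ν S = 0) ∧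
      SD μ ν ≤ (n : ℝ) ^ t * γ := by
    rcases t with _ | _ | _ | t
    · obtain ⟨ν, hν, hzero, hSD⟩ := exists_isDist_bias_smallSets_eq_zero hμ 0
      exact ⟨ν, hν, hzero, hSD.trans (by simp [smallSets, hγ])⟩
    · exact exists_isDist_bias_smallSets_one_eq_zero hμ fun i => hbias {i} (by simp [mem_smallSets])
    · obtain ⟨ν, hν, hzero, hSD⟩ := exists_isDist_bias_smallSets_eq_zero hμ 2
      exact ⟨ν, hν, hzero, hSD.trans (sum_abs_bias_smallSets_two_le μ hμ.2 hγ htn h)⟩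
    · obtain ⟨ν, hν, hzero, hSD⟩ := exists_isDist_bias_smallSets_eq_zero hμ (t + 3)
      exact ⟨ν, hν, hzero, hSD.trans
        (sum_abs_bias_smallSets_le_of_three_le hγ (by omega) (by omega) hbias)⟩
  refine ⟨ν, hν, fun T hT => projDist_eq_unif_of_bias_eq_zero hν.2 fun S hST hS => ?_, hSD⟩
  exact hzero S (mem_smallSets.2 ⟨hS, hT ▸ card_le_card hST⟩)
end
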